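/- arXiv:1803.04673 — 5 statements merged into one kernel-verified Lean document; each statement's English description precedes it below -/
import Mathlib

section
/- Let x* ∈ X*. Assume U is nonempty and there exists x̄ ∈ X with p(x̄) ∈ ℝ (i.e., dom p ≠ ∅). Then the following statements are equivalent: (i) p*(x*) = q(x*) (robust duality holds at x*); (ii) for every ε ≥ 0, (M^ε p)(x*) = S^ε(x*); (iii) there exists ε̄ > 0 such that (M^ε p)(x*) = S^ε(x*) for all ε ∈ (0, ε̄). -/
/-!
Since `inf (p - x*) = -p*(x*)`, the set `(M^ε p)(x*)` consists of the points of `dom p` where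
`p - x*` is within `ε` of `-p*(x*)`, and `S^ε(x*)` is the same set with `-q(x*)` in place of
`-p*(x*)`. So robust duality makes the two sets equal. Conversely, weak duality gives `p* ≤ q`,
and since `dom p ≠ ∅` the function `p - x*` has `ε`-minimizers for every `ε > 0`; if they all lie
in `S^ε(x*)` then `-p*(x*) ≤ -q(x*) + ε` for all small `ε`, hence `q ≤ p*`.
-/

noncomputable section

namespace RobustDuality

/-- The set of `ε`-minimizers of an extended-real-valued function `h`:
`{z | h z ∈ ℝ ∧ h z ≤ inf h + ε}` (empty when `inf h ∉ ℝ`). -/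
def epsArgmin {Z : Type*} (h : Z → EReal) (ε : ℝ) : Set Z :=
  {z | (∃ r : ℝ, h z = (r : EReal)) ∧ h z ≤ (⨅ w, h w) + (ε : EReal)}

variable {X : Type*} [AddCommGroup X] [Module ℝ X] [TopologicalSpace X]
  [IsTopologicalAddGroup X] [ContinuousSMul ℝ X] [LocallyConvexSpace ℝ X] [T2Space X]

/-- `(M^ε h)(x*) := ε-argmin (h - x*)` for `h : X → EReal` and `x* ∈ X*`. -/
def M1 (h : X → EReal) (ε : ℝ) (xs : X →L[ℝ] ℝ) : Set X :=
  epsArgmin (fun x => h x - ((xs x : ℝ) : EReal)) ε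

/-- Fenchel conjugate of `h : X → EReal`. -/
def conj1 (h : X → EReal) (xs : X →L[ℝ] ℝ) : EReal :=
  ⨆ x : X, ((xs x : ℝ) : EReal) - h x

/-- `ε`-subdifferential of `h : X → EReal` at `a`. -/
def epsSubdiff1 (h : X → EReal) (ε : ℝ) (a : X) : Set (X →L[ℝ] ℝ) :=
  {xs | (∃ r : ℝ, h a = (r : EReal)) ∧
    ∀ x, h a + ((xs x - xs a - ε : ℝ) : EReal) ≤ h x}

section Pair

variable {Yu : Type*} [AddCommGroup Yu] [Module ℝ Yu] [TopologicalSpace Yu]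
  [IsTopologicalAddGroup Yu] [ContinuousSMul ℝ Yu] [LocallyConvexSpace ℝ Yu] [T2Space Yu]

/-- Fenchel conjugate of `F : X × Y → EReal` at `(x*, y*)`. -/
def conj2 (F : X × Yu → EReal) (xs : X →L[ℝ] ℝ) (ys : Yu →L[ℝ] ℝ) : EReal :=
  ⨆ z : X × Yu, ((xs z.1 + ys z.2 : ℝ) : EReal) - F z

/-- `(M^ε F)(x*, y*) := ε-argmin (F - (x*, y*))`. -/
def M2 (F : X × Yu → EReal) (ε : ℝ) (xs : X →L[ℝ] ℝ) (ys : Yu →L[ℝ] ℝ) : Set (X × Yu) :=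
  epsArgmin (fun z => F z - ((xs z.1 + ys z.2 : ℝ) : EReal)) ε

/-- `ε`-subdifferential of `F : X × Y → EReal` at `a`, as a set of dual pairs. -/
def epsSubdiff2 (F : X × Yu → EReal) (ε : ℝ) (a : X × Yu) :
    Set ((X →L[ℝ] ℝ) × (Yu →L[ℝ] ℝ)) :=
  {zs | (∃ r : ℝ, F a = (r : EReal)) ∧
    ∀ z, F a + ((zs.1 z.1 + zs.2 z.2 - zs.1 a.1 - zs.2 a.2 - ε : ℝ) : EReal) ≤ F z}

end Pair

variable {U : Type*} {Y : U → Type*} [∀ u, AddCommGroup (Y u)] [∀ u, Module ℝ (Y u)]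
  [∀ u, TopologicalSpace (Y u)] [∀ u, IsTopologicalAddGroup (Y u)]
  [∀ u, ContinuousSMul ℝ (Y u)] [∀ u, LocallyConvexSpace ℝ (Y u)] [∀ u, T2Space (Y u)]

/-- The robust objective `p := sup_{u ∈ U} F_u (·, 0_u)`. -/
def pRob (F : ∀ u, X × Y u → EReal) (x : X) : EReal := ⨆ u, F u (x, 0)

/-- `q := inf over u ∈ U and y* ∈ Y_u* of F_u*(·, y*)`. -/
def qRob (F : ∀ u, X × Y u → EReal) (xs : X →L[ℝ] ℝ) : EReal :=
  ⨅ (u : U) (ys : Y u →L[ℝ] ℝ), conj2 (F u) xs ys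

/-- `S^ε(x*) := {x : p x ∈ ℝ ∧ p x - ⟨x*, x⟩ ≤ -q x* + ε}`. -/
def Sset (F : ∀ u, X × Y u → EReal) (ε : ℝ) (xs : X →L[ℝ] ℝ) : Set X :=
  {x | (∃ r : ℝ, pRob F x = (r : EReal)) ∧
    pRob F x - ((xs x : ℝ) : EReal) ≤ -qRob F xs + (ε : EReal)}

/-- `J^ε(u) := {x : p x ∈ ℝ ∧ p x ≤ F_u(x, 0) + ε}`. -/
def Jset (F : ∀ u, X × Y u → EReal) (ε : ℝ) (u : U) : Set X :=
  {x | (∃ r : ℝ, pRob F x = (r : EReal)) ∧ pRob F x ≤ F u (x, 0) + (ε : EReal)}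

/-- `A^{(ε₁,ε₂)}_{(u,y*)}(x*) := {x ∈ J^{ε₁}(u) : (x, 0) ∈ (M^{ε₂}F_u)(x*, y*)}`. -/
def Aset (F : ∀ u, X × Y u → EReal) (ε₁ ε₂ : ℝ) (u : U) (ys : Y u →L[ℝ] ℝ)
    (xs : X →L[ℝ] ℝ) : Set X :=
  {x | x ∈ Jset F ε₁ u ∧ (x, (0 : Y u)) ∈ M2 (F u) ε₂ xs ys}

/-- `𝒜^ε(x*)`. -/
def calA (F : ∀ u, X × Y u → EReal) (ε : ℝ) (xs : X →L[ℝ] ℝ) : Set X :=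
  ⋂ (η : ℝ) (_ : 0 < η),
    ⋃ (u : U) (ys : Y u →L[ℝ] ℝ) (ε₁ : ℝ) (ε₂ : ℝ)
      (_ : 0 ≤ ε₁) (_ : 0 ≤ ε₂) (_ : ε₁ + ε₂ = ε + η), Aset F ε₁ ε₂ u ys xs

/-- `B^ε_{(u,y*)}(x*)`. -/
def Bset (F : ∀ u, X × Y u → EReal) (ε : ℝ) (u : U) (ys : Y u →L[ℝ] ℝ)
    (xs : X →L[ℝ] ℝ) : Set X :=
  ⋃ (ε₁ : ℝ) (ε₂ : ℝ) (_ : 0 ≤ ε₁) (_ : 0 ≤ ε₂) (_ : ε₁ + ε₂ = ε),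
    Aset F ε₁ ε₂ u ys xs

/-- `B^ε(x*) := ⋃_{u, y*} B^ε_{(u,y*)}(x*)`. -/
def BsetAll (F : ∀ u, X × Y u → EReal) (ε : ℝ) (xs : X →L[ℝ] ℝ) : Set X :=
  ⋃ (u : U) (ys : Y u →L[ℝ] ℝ), Bset F ε u ys xs

/-- `I^ε(x)`: the set of `ε`-active indices at `x`. -/
def Iset (F : ∀ u, X × Y u → EReal) (ε : ℝ) (x : X) : Set U :=
  {u | (∃ r : ℝ, pRob F x = (r : EReal)) ∧ pRob F x - (ε : EReal) ≤ F u (x, 0)}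

/-- `C^ε(x)`. -/
def Cset (F : ∀ u, X × Y u → EReal) (ε : ℝ) (x : X) : Set (X →L[ℝ] ℝ) :=
  ⋂ (η : ℝ) (_ : 0 < η),
    ⋃ (ε₁ : ℝ) (ε₂ : ℝ) (_ : 0 ≤ ε₁) (_ : 0 ≤ ε₂) (_ : ε₁ + ε₂ = ε + η)
      (u : U) (_ : u ∈ Iset F ε₁ x),
      Prod.fst '' epsSubdiff2 (F u) ε₂ (x, (0 : Y u))

/-- `D^ε(x)`. -/
def Dset (F : ∀ u, X × Y u → EReal) (ε : ℝ) (x : X) : Set (X →L[ℝ] ℝ) :=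
  ⋃ (ε₁ : ℝ) (ε₂ : ℝ) (_ : 0 ≤ ε₁) (_ : 0 ≤ ε₂) (_ : ε₁ + ε₂ = ε)
    (u : U) (_ : u ∈ Iset F ε₁ x),
    Prod.fst '' epsSubdiff2 (F u) ε₂ (x, (0 : Y u))

/-- The exact active index set `I(x) := {u : F_u(x,0) = p(x)}` (when `p(x) ∈ ℝ`). -/
def I0set (F : ∀ u, X × Y u → EReal) (x : X) : Set U :=
  {u | (∃ r : ℝ, pRob F x = (r : EReal)) ∧ F u (x, 0) = pRob F x}

/-- `D(x) := ⋃_{u ∈ I(x)} proj_{X*} ∂F_u(x, 0)`. -/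
def D0set (F : ∀ u, X × Y u → EReal) (x : X) : Set (X →L[ℝ] ℝ) :=
  ⋃ (u : U) (_ : u ∈ I0set F x), Prod.fst '' epsSubdiff2 (F u) 0 (x, (0 : Y u))

/-- `B_{(u,y*)}(x*) := {x ∈ J(u) : (x, 0) ∈ (M F_u)(x*, y*)}`. -/
def B0set (F : ∀ u, X × Y u → EReal) (u : U) (ys : Y u →L[ℝ] ℝ)
    (xs : X →L[ℝ] ℝ) : Set X :=
  {x | (∃ r : ℝ, pRob F x = (r : EReal)) ∧ F u (x, 0) = pRob F x ∧
    (x, (0 : Y u)) ∈ M2 (F u) 0 xs ys}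

namespace EReal

lemma neg_iSup {ι : Sort*} (f : ι → EReal) : -⨆ i, f i = ⨅ i, -f i :=
  le_antisymm (le_iInf fun i => EReal.neg_le_neg_iff.2 (le_iSup f i))
    (EReal.le_neg_of_le_neg (iSup_le fun i => EReal.le_neg_of_le_neg (iInf_le _ i)))

lemma neg_coe_sub (a : EReal) (r : ℝ) : -((r : EReal) - a) = a - r := by
  induction a using EReal.rec with
  | bot => simp
  | top => simp
  | coe a => norm_cast; ring

lemma exists_coe_eq_sub_coe_iff (a : EReal) (r : ℝ) :
    (∃ s : ℝ, a - r = s) ↔ ∃ s : ℝ, a = s := by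
  induction a using EReal.rec with
  | bot => simp
  | top => simp
  | coe a => exact ⟨fun _ => ⟨a, rfl⟩, fun _ => ⟨a - r, rfl⟩⟩

lemma le_of_forall_pos_lt_le_add {a b : EReal} {δ : ℝ} (hδ : 0 < δ)
    (h : ∀ ε : ℝ, 0 < ε → ε < δ → a ≤ b + ε) : a ≤ b := by
  refine EReal.le_of_forall_lt_iff_le.1 fun c hbc => ?_
  induction b using EReal.rec with
  | bot => exact (h (δ / 2) (by linarith) (by linarith)).trans (by simp)
  | top => exact absurd hbc not_top_lt
  | coe b =>
    have hbc : b < c := EReal.coe_lt_coe_iff.1 hbc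
    obtain ⟨ε, hε, hεδ, hεc⟩ : ∃ ε : ℝ, 0 < ε ∧ ε < δ ∧ b + ε ≤ c :=
      ⟨min δ (c - b) / 2, by positivity, by linarith [min_le_left δ (c - b)],
        by linarith [min_le_right δ (c - b)]⟩
    exact (h ε hε hεδ).trans (by exact_mod_cast hεc)

end EReal

lemma iInf_le_of_epsArgmin_subset {Z : Type*} {h : Z → EReal} {b : EReal} {δ : ℝ}
    (hδ : 0 < δ) (hdom : ∃ z, h z ≠ ⊤)
    (hsub : ∀ ε : ℝ, 0 < ε → ε < δ → epsArgmin h ε ⊆ {z | h z ≤ b + ε}) :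
    ⨅ z, h z ≤ b := by
  induction hinf : ⨅ z, h z using EReal.rec with
  | bot => exact bot_le
  | top =>
    obtain ⟨z, hz⟩ := hdom
    exact absurd (top_le_iff.1 (hinf ▸ iInf_le h z)) hz
  | coe a =>
    refine EReal.le_of_forall_pos_lt_le_add hδ fun ε hε hεδ => ?_
    obtain ⟨z, hz⟩ := iInf_lt_iff.1 (hinf ▸ EReal.coe_lt_coe_iff.2 (lt_add_of_pos_right a hε))
    have hz_ne_bot : h z ≠ ⊥ := ne_bot_of_le_ne_bot (EReal.coe_ne_bot a) (hinf ▸ iInf_le h z)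
    have hz_min : z ∈ epsArgmin h ε :=
      ⟨⟨(h z).toReal, (EReal.coe_toReal hz.ne_top hz_ne_bot).symm⟩, hinf ▸ hz.le⟩
    exact (hinf ▸ iInf_le h z).trans (hsub ε hε hεδ hz_min)

section Conjugate

variable {E : Type*} [AddCommGroup E] [Module ℝ E] [TopologicalSpace E]

lemma iInf_sub_eq_neg_conj1 (h : E → EReal) (xs : E →L[ℝ] ℝ) :
    ⨅ x, (h x - ((xs x : ℝ) : EReal)) = -conj1 h xs := by
  simp only [conj1, EReal.neg_iSup, EReal.neg_coe_sub]

lemma M1_eq_setOf (h : E → EReal) (ε : ℝ) (xs : E →L[ℝ] ℝ) :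
    M1 h ε xs = {x | (∃ r : ℝ, h x = r) ∧ h x - ((xs x : ℝ) : EReal) ≤ -conj1 h xs + ε} := by
  ext x
  simp only [M1, epsArgmin, iInf_sub_eq_neg_conj1, EReal.exists_coe_eq_sub_coe_iff]

variable {ι : Type*} {V : ι → Type*} [∀ i, AddCommGroup (V i)] [∀ i, Module ℝ (V i)]
  [∀ i, TopologicalSpace (V i)]

lemma conj1_pRob_le_qRob (F : ∀ i, E × V i → EReal) (xs : E →L[ℝ] ℝ) :
    conj1 (pRob F) xs ≤ qRob F xs := by
  refine le_iInf₂ fun i ys => iSup_le fun x => ?_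
  calc ((xs x : ℝ) : EReal) - pRob F x
      ≤ ((xs x + ys 0 : ℝ) : EReal) - F i (x, 0) := by
        rw [map_zero, add_zero]
        exact EReal.sub_le_sub le_rfl (le_iSup (fun i => F i (x, 0)) i)
    _ ≤ conj2 (F i) xs ys :=
        le_iSup (fun z : E × V i => ((xs z.1 + ys z.2 : ℝ) : EReal) - F i z) (x, 0)

end Conjugate

theorem robust_duality_iff_M_eq_S_general
    (F : ∀ u, X × Y u → EReal)
    (hdomp : ∃ xbar : X, ∃ r : ℝ, pRob F xbar = (r : EReal)) (xs : X →L[ℝ] ℝ) :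
    List.TFAE
      [conj1 (pRob F) xs = qRob F xs,
       ∀ ε : ℝ, 0 ≤ ε → M1 (pRob F) ε xs = Sset F ε xs,
       ∃ εbar : ℝ, 0 < εbar ∧
         ∀ ε : ℝ, 0 < ε → ε < εbar → M1 (pRob F) ε xs = Sset F ε xs] := by
  tfae_have 1 → 2
  | h, ε, _ => by rw [M1_eq_setOf, h]; rfl
  tfae_have 2 → 3
  | h => ⟨1, one_pos, fun ε hε _ => h ε hε.le⟩
  tfae_have 3 → 1
  | ⟨εbar, hεbar, h⟩ => by
    refine le_antisymm (conj1_pRob_le_qRob F xs) (EReal.neg_le_neg_iff.1 ?_)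
    rw [← iInf_sub_eq_neg_conj1]
    obtain ⟨xbar, r, hr⟩ := hdomp
    have hxbar : pRob F xbar - ((xs xbar : ℝ) : EReal) ≠ ⊤ := by
      rw [hr, ← EReal.coe_sub]
      exact EReal.coe_ne_top _
    refine iInf_le_of_epsArgmin_subset hεbar ⟨xbar, hxbar⟩ fun ε hε hεε => ?_
    rw [← M1, h ε hε hεε]
    exact fun x hx => hx.2
  tfae_finish

/-- Lemma 3.1 (robust duality at `x*` via the sets `S^ε`). -/
theorem robust_duality_iff_M_eq_S
    (F : ∀ u, X × Y u → EReal) (hU : Nonempty U) (hF : ∀ u z, F u z ≠ ⊥)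
    (hdomp : ∃ xbar : X, ∃ r : ℝ, pRob F xbar = (r : EReal)) (xs : X →L[ℝ] ℝ) :
    List.TFAE
      [conj1 (pRob F) xs = qRob F xs,
       ∀ ε : ℝ, 0 ≤ ε → M1 (pRob F) ε xs = Sset F ε xs,
       ∃ εbar : ℝ, 0 < εbar ∧
         ∀ ε : ℝ, 0 < ε → ε < εbar → M1 (pRob F) ε xs = Sset F ε xs] :=
  robust_duality_iff_M_eq_S_general F hdomp xs

end RobustDuality
end
end

section
/- Assume dom F_u ≠ ∅ for every u ∈ U. Then for every x* ∈ X*, every ε ≥ 0 and every η > 0, S^ε(x*) is contained in the union, over all u ∈ U, y_u* ∈ Y_u* and all ε₁, ε₂ ≥ 0 with ε₁ + ε₂ = ε + η, of the sets A^{(ε₁,ε₂)}_{(u,y_u*)}(x*). -/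
noncomputable section

/-! For `x ∈ S^ε(x*)` the value `q(x*)` is finite, so some `(u, y*)` has
`F_u*(x*, y*) < q(x*) + η`. The Fenchel–Young gap of `F_u` at `((x, 0), (x*, y*))`,
`ε₂ = F_u(x, 0) - ⟨x*, x⟩ + F_u*(x*, y*) ≥ 0`, is exactly how far `(x, 0)` is from minimizing
`F_u - (x*, y*)`, while `p(x) - F_u(x, 0) ≤ ε + η - ε₂` by the defining inequality of `S^ε(x*)`. -/

namespace RobustDuality

section Conjugate

variable {X Yu : Type*} [AddCommGroup X] [Module ℝ X] [TopologicalSpace X]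
  [AddCommGroup Yu] [Module ℝ Yu] [TopologicalSpace Yu]

theorem coe_sub_le_conj2 (F : X × Yu → EReal) (xs : X →L[ℝ] ℝ) (ys : Yu →L[ℝ] ℝ)
    (z : X × Yu) : ((xs z.1 + ys z.2 : ℝ) : EReal) - F z ≤ conj2 F xs ys :=
  le_iSup (fun z : X × Yu => ((xs z.1 + ys z.2 : ℝ) : EReal) - F z) z

theorem neg_conj2_le_sub (F : X × Yu → EReal) (xs : X →L[ℝ] ℝ) (ys : Yu →L[ℝ] ℝ)
    (z : X × Yu) : -conj2 F xs ys ≤ F z - ((xs z.1 + ys z.2 : ℝ) : EReal) := by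
  rw [EReal.neg_le, EReal.neg_sub (Or.inr (EReal.coe_ne_bot _)) (Or.inr (EReal.coe_ne_top _)),
    add_comm, ← sub_eq_add_neg]
  exact coe_sub_le_conj2 F xs ys z

theorem ne_bot_of_conj2_ne_top {F : X × Yu → EReal} {xs : X →L[ℝ] ℝ} {ys : Yu →L[ℝ] ℝ}
    (hc : conj2 F xs ys ≠ ⊤) (z : X × Yu) : F z ≠ ⊥ := by
  intro hz
  have h := coe_sub_le_conj2 F xs ys z
  rw [hz, EReal.coe_sub_bot, top_le_iff] at h
  exact hc h

theorem mem_M2_of_conj2_eq_coe {F : X × Yu → EReal} {xs : X →L[ℝ] ℝ} {ys : Yu →L[ℝ] ℝ}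
    {a : X × Yu} {b C ε : ℝ} (ha : F a = b) (hC : conj2 F xs ys = C)
    (hε : b - (xs a.1 + ys a.2) + C ≤ ε) : a ∈ M2 F ε xs ys := by
  refine ⟨⟨b - (xs a.1 + ys a.2), by dsimp only; rw [ha, EReal.coe_sub]⟩, ?_⟩
  have hinf : ((-C : ℝ) : EReal) ≤ ⨅ z, F z - ((xs z.1 + ys z.2 : ℝ) : EReal) :=
    le_iInf fun z => by simpa [hC] using neg_conj2_le_sub F xs ys z
  calc F a - ((xs a.1 + ys a.2 : ℝ) : EReal)
      = ((-C : ℝ) : EReal) + ((b - (xs a.1 + ys a.2) + C : ℝ) : EReal) := by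
        rw [ha, ← EReal.coe_sub, ← EReal.coe_add]; congr 1; ring
    _ ≤ (⨅ z, F z - ((xs z.1 + ys z.2 : ℝ) : EReal)) + (ε : EReal) :=
        add_le_add hinf (EReal.coe_le_coe_iff.mpr hε)

end Conjugate

theorem le_pRob {X U : Type*} {Y : U → Type*} [∀ u, AddCommGroup (Y u)]
    (F : ∀ u, X × Y u → EReal) (u : U) (x : X) : F u (x, 0) ≤ pRob F x :=
  le_iSup (fun u => F u (x, 0)) u

section Robust

variable {X : Type*} [AddCommGroup X] [Module ℝ X] [TopologicalSpace X]
  {U : Type*} {Y : U → Type*} [∀ u, AddCommGroup (Y u)] [∀ u, Module ℝ (Y u)]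
  [∀ u, TopologicalSpace (Y u)]

theorem coe_sub_le_qRob {F : ∀ u, X × Y u → EReal} {x : X} {r : ℝ} (hr : pRob F x = r)
    (xs : X →L[ℝ] ℝ) : ((xs x - r : ℝ) : EReal) ≤ qRob F xs :=
  le_iInf₂ fun u ys => calc
    ((xs x - r : ℝ) : EReal) ≤ ((xs x + ys 0 : ℝ) : EReal) - F u (x, 0) := by
      rw [map_zero, add_zero, EReal.coe_sub]
      exact EReal.sub_le_sub le_rfl (hr ▸ le_pRob F u x)
    _ ≤ conj2 (F u) xs ys := coe_sub_le_conj2 (F u) xs ys (x, 0)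

theorem exists_coe_of_mem_Sset {F : ∀ u, X × Y u → EReal} {ε : ℝ} {xs : X →L[ℝ] ℝ} {x : X}
    (hx : x ∈ Sset F ε xs) :
    ∃ r Q : ℝ, pRob F x = r ∧ qRob F xs = Q ∧ r - xs x + Q ≤ ε := by
  obtain ⟨⟨r, hr⟩, hS⟩ := hx
  have hlb := coe_sub_le_qRob hr xs
  rw [hr] at hS
  generalize qRob F xs = q at hS hlb ⊢
  induction q using EReal.rec with
  | bot => exact absurd (le_bot_iff.mp hlb) (EReal.coe_ne_bot _)
  | top =>
    rw [EReal.neg_top, EReal.bot_add, le_bot_iff, ← EReal.coe_sub] at hS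
    exact absurd hS (EReal.coe_ne_bot _)
  | coe Q =>
    refine ⟨r, Q, hr, rfl, ?_⟩
    have hS' : r - xs x ≤ -Q + ε := by exact_mod_cast hS
    linarith

theorem exists_conj2_lt {F : ∀ u, X × Y u → EReal} {xs : X →L[ℝ] ℝ} {Q η : ℝ}
    (hQ : qRob F xs = Q) (hη : 0 < η) :
    ∃ (u : U) (ys : Y u →L[ℝ] ℝ) (C : ℝ), conj2 (F u) xs ys = C ∧ C < Q + η := by
  have hlt : qRob F xs < ((Q + η : ℝ) : EReal) := by
    rw [hQ]; exact_mod_cast lt_add_of_pos_right Q hη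
  obtain ⟨u, hu⟩ := iInf_lt_iff.mp hlt
  obtain ⟨ys, hys⟩ := iInf_lt_iff.mp hu
  have hge : qRob F xs ≤ conj2 (F u) xs ys :=
    iInf₂_le (f := fun u (ys : Y u →L[ℝ] ℝ) => conj2 (F u) xs ys) u ys
  rw [hQ] at hge
  refine ⟨u, ys, ?_⟩
  generalize conj2 (F u) xs ys = c at hys hge
  induction c using EReal.rec with
  | bot => exact absurd (le_bot_iff.mp hge) (EReal.coe_ne_bot _)
  | top => exact absurd hys not_top_lt
  | coe C => exact ⟨C, rfl, EReal.coe_lt_coe_iff.mp hys⟩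

theorem exists_apply_zero_eq_coe {F : ∀ u, X × Y u → EReal} {x : X} {u : U}
    {xs : X →L[ℝ] ℝ} {ys : Y u →L[ℝ] ℝ} {r C : ℝ} (hr : pRob F x = r)
    (hC : conj2 (F u) xs ys = C) : ∃ a : ℝ, F u (x, 0) = a ∧ a ≤ r ∧ xs x - a ≤ C := by
  have hle : F u (x, 0) ≤ r := hr ▸ le_pRob F u x
  have hyoung := coe_sub_le_conj2 (F u) xs ys (x, 0)
  have hbot := ne_bot_of_conj2_ne_top (hC ▸ EReal.coe_ne_top C) (x, (0 : Y u))
  rw [hC, map_zero, add_zero] at hyoung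
  generalize F u (x, 0) = v at hle hyoung hbot
  induction v using EReal.rec with
  | bot => exact absurd rfl hbot
  | top => exact absurd (top_le_iff.mp hle) (EReal.coe_ne_top r)
  | coe a => exact ⟨a, rfl, EReal.coe_le_coe_iff.mp hle, by exact_mod_cast hyoung⟩

theorem mem_Aset_of_coe {F : ∀ u, X × Y u → EReal} {x : X} {u : U} {xs : X →L[ℝ] ℝ}
    {ys : Y u →L[ℝ] ℝ} {r a C ε₁ ε₂ : ℝ} (hr : pRob F x = r) (ha : F u (x, 0) = a)
    (hC : conj2 (F u) xs ys = C) (h₁ : r ≤ a + ε₁) (h₂ : a - xs x + C ≤ ε₂) :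
    x ∈ Aset F ε₁ ε₂ u ys xs :=
  ⟨⟨⟨r, hr⟩, by rw [hr, ha]; exact_mod_cast h₁⟩,
    mem_M2_of_conj2_eq_coe ha hC (by simpa using h₂)⟩

end Robust

variable {X : Type*} [AddCommGroup X] [Module ℝ X] [TopologicalSpace X]
  [IsTopologicalAddGroup X] [ContinuousSMul ℝ X] [LocallyConvexSpace ℝ X] [T2Space X]

variable {U : Type*} {Y : U → Type*} [∀ u, AddCommGroup (Y u)] [∀ u, Module ℝ (Y u)]
  [∀ u, TopologicalSpace (Y u)] [∀ u, IsTopologicalAddGroup (Y u)]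
  [∀ u, ContinuousSMul ℝ (Y u)] [∀ u, LocallyConvexSpace ℝ (Y u)] [∀ u, T2Space (Y u)]

theorem Sset_subset_iUnion_Aset_general
    (F : ∀ u, X × Y u → EReal)
    (xs : X →L[ℝ] ℝ) (ε : ℝ) (η : ℝ) (hη : 0 < η) :
    Sset F ε xs ⊆
      ⋃ (u : U) (ys : Y u →L[ℝ] ℝ) (ε₁ : ℝ) (ε₂ : ℝ)
        (_ : 0 ≤ ε₁) (_ : 0 ≤ ε₂) (_ : ε₁ + ε₂ = ε + η),
        Aset F ε₁ ε₂ u ys xs := by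
  intro x hx
  obtain ⟨r, Q, hr, hQ, hrQ⟩ := exists_coe_of_mem_Sset hx
  obtain ⟨u, ys, C, hC, hCQ⟩ := exists_conj2_lt hQ hη
  obtain ⟨a, ha, har, hyoung⟩ := exists_apply_zero_eq_coe hr hC
  simp only [Set.mem_iUnion]
  exact ⟨u, ys, ε + η - (a - xs x + C), a - xs x + C, by linarith, by linarith, by ring,
    mem_Aset_of_coe hr ha hC (by linarith) le_rfl⟩

/-- Lemma 3.3: under `dom F_u ≠ ∅` for all `u`, `S^ε(x*)` is covered by the sets
`A^{(ε₁,ε₂)}_{(u,y*)}(x*)` with `ε₁ + ε₂ = ε + η`. -/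
theorem Sset_subset_iUnion_Aset
    (F : ∀ u, X × Y u → EReal) (hU : Nonempty U) (hF : ∀ u z, F u z ≠ ⊥)
    (hdomF : ∀ u, ∃ z : X × Y u, F u z ≠ ⊤)
    (xs : X →L[ℝ] ℝ) (ε : ℝ) (hε : 0 ≤ ε) (η : ℝ) (hη : 0 < η) :
    Sset F ε xs ⊆
      ⋃ (u : U) (ys : Y u →L[ℝ] ℝ) (ε₁ : ℝ) (ε₂ : ℝ)
        (_ : 0 ≤ ε₁) (_ : 0 ≤ ε₂) (_ : ε₁ + ε₂ = ε + η),
        Aset F ε₁ ε₂ u ys xs :=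
  Sset_subset_iUnion_Aset_general F xs ε η hη

end RobustDuality
end
end

section
/- Let (f_u)_{u∈U} be a family of functions f_u : X → ℝ ∪ {+∞} with U nonempty, let p := sup_{u∈U} f_u, and assume dom p ≠ ∅. Then for each x* ∈ X*, the duality formula (sup_{u∈U} f_u)*(x*) = inf_{u∈U} f_u*(x*) holds if and only if (M^ε p)(x*) = 𝒜^ε(x*) for all ε ≥ 0, and also if and only if there exists ε̄ > 0 with (M^ε p)(x*) = 𝒜^ε(x*) for all ε ∈ (0, ε̄), where 𝒜^ε(x*) := ⋂_{η>0} ⋃_{u∈U} ⋃_{ε₁,ε₂≥0, ε₁+ε₂=ε+η} (J^{ε₁}(u) ∩ (M^{ε₂}f_u)(x*)) and J^{ε₁}(u) := {x ∈ X : p(x) ∈ ℝ and f_u(x) ≥ p(x) − ε₁}. -/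
noncomputable section

namespace RobustDuality

variable {X : Type*} [AddCommGroup X] [Module ℝ X] [TopologicalSpace X]
  [IsTopologicalAddGroup X] [ContinuousSMul ℝ X] [LocallyConvexSpace ℝ X] [T2Space X]

variable {U : Type*}

/-- `p := sup_{u ∈ U} f_u`. -/
def pSup (f : U → X → EReal) (x : X) : EReal := ⨆ u, f u x

/-- `J^ε(u) := {x : p x ∈ ℝ ∧ f_u x ≥ p x - ε}`. -/
def J2set (f : U → X → EReal) (ε : ℝ) (u : U) : Set X :=
  {x | (∃ r : ℝ, pSup f x = (r : EReal)) ∧ pSup f x - (ε : EReal) ≤ f u x}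

/-- `𝒜^ε(x*)` for the non-perturbation case. -/
def calA2 (f : U → X → EReal) (ε : ℝ) (xs : X →L[ℝ] ℝ) : Set X :=
  ⋂ (η : ℝ) (_ : 0 < η),
    ⋃ (u : U) (ε₁ : ℝ) (ε₂ : ℝ) (_ : 0 ≤ ε₁) (_ : 0 ≤ ε₂) (_ : ε₁ + ε₂ = ε + η),
      J2set f ε₁ u ∩ M1 (f u) ε₂ xs

/-- `B^ε_u(x*)` for the non-perturbation case. -/
def B2set (f : U → X → EReal) (ε : ℝ) (u : U) (xs : X →L[ℝ] ℝ) : Set X :=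
  ⋃ (ε₁ : ℝ) (ε₂ : ℝ) (_ : 0 ≤ ε₁) (_ : 0 ≤ ε₂) (_ : ε₁ + ε₂ = ε),
    J2set f ε₁ u ∩ M1 (f u) ε₂ xs

/-- `I^ε(x) := {u : f_u x ≥ p x - ε}` (when `p x ∈ ℝ`). -/
def I2set (f : U → X → EReal) (ε : ℝ) (x : X) : Set U :=
  {u | (∃ r : ℝ, pSup f x = (r : EReal)) ∧ pSup f x - (ε : EReal) ≤ f u x}

/-- `C^ε(x)` for the non-perturbation case. -/
def C2set (f : U → X → EReal) (ε : ℝ) (x : X) : Set (X →L[ℝ] ℝ) :=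
  ⋂ (η : ℝ) (_ : 0 < η),
    ⋃ (ε₁ : ℝ) (ε₂ : ℝ) (_ : 0 ≤ ε₁) (_ : 0 ≤ ε₂) (_ : ε₁ + ε₂ = ε + η)
      (u : U) (_ : u ∈ I2set f ε₁ x), epsSubdiff1 (f u) ε₂ x

/-- `J(u) := {x : p x ∈ ℝ ∧ f_u x = p x}`. -/
def J02set (f : U → X → EReal) (u : U) : Set X :=
  {x | (∃ r : ℝ, pSup f x = (r : EReal)) ∧ f u x = pSup f x}

/-- `B_u(x*) := J(u) ∩ (M f_u)(x*)`. -/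
def B02set (f : U → X → EReal) (u : U) (xs : X →L[ℝ] ℝ) : Set X :=
  J02set f u ∩ M1 (f u) 0 xs

/-!
With `m = inf (p - x*) = -p*(x*)` and `μ_u = inf (f_u - x*) = -f_u*(x*)`, the duality formula says
`m ≤ sup_u μ_u`, the reverse inequality being automatic. A point of `J^{ε₁}(u) ∩ (M^{ε₂} f_u)(x*)`
satisfies `p x - x* x ≤ μ_u + ε₁ + ε₂`. This gives `𝒜^ε(x*) ⊆ (M^ε p)(x*)` unconditionally, and,
applied to an `ε`-minimizer of `p - x*` (one exists as soon as `m` is finite), it gives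
`m ≤ sup_u μ_u + ε + η`. Conversely, under duality an `ε`-minimizer `x` of `p - x*` lies in
`J^{ε₁}(u) ∩ (M^{ε₂} f_u)(x*)` for any `u` with `μ_u > m - η`, with `ε₁ = p x - f_u x`.
-/

theorem le_of_forall_pos_le_add_coe {a b : EReal} (h : ∀ η : ℝ, 0 < η → a ≤ b + η) :
    a ≤ b := by
  induction b using EReal.rec with
  | bot => simpa using h 1 one_pos
  | top => exact le_top
  | coe b =>
    induction a using EReal.rec with
    | bot => exact bot_le
    | top => exact absurd (h 1 one_pos) (not_le.2 (by exact_mod_cast EReal.coe_lt_top (b + 1)))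
    | coe a => exact_mod_cast le_of_forall_pos_le_add fun η hη => by exact_mod_cast h η hη

theorem epsArgmin_nonempty {Z : Type*} {h : Z → EReal} (hbot : ⨅ z, h z ≠ ⊥)
    (htop : ⨅ z, h z ≠ ⊤) {ε : ℝ} (hε : 0 < ε) : (epsArgmin h ε).Nonempty := by
  lift ⨅ z, h z to ℝ using ⟨htop, hbot⟩ with m hm
  obtain ⟨z, hz⟩ := iInf_lt_iff.1 (hm ▸ (by exact_mod_cast lt_add_of_pos_right m hε :
    (m : EReal) < m + ε))
  have hbot' : h z ≠ ⊥ := ne_bot_of_le_ne_bot (hm ▸ EReal.coe_ne_bot m) (iInf_le h z)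
  exact ⟨z, ⟨(h z).toReal, (EReal.coe_toReal (ne_top_of_lt hz) hbot').symm⟩, hm ▸ hz.le⟩

section

variable {Z : Type*} {f : U → Z → EReal}

theorem le_pSup (u : U) (z : Z) : f u z ≤ pSup f z := le_iSup (fun u => f u z) u

theorem mem_J2set_iff {ε : ℝ} {u : U} {z : Z} :
    z ∈ J2set f ε u ↔ ∃ a c : ℝ, pSup f z = a ∧ f u z = c ∧ a - ε ≤ c := by
  constructor
  · rintro ⟨⟨a, ha⟩, hle⟩
    have hfu := le_pSup (f := f) u z
    rw [ha] at hle hfu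
    generalize f u z = t at hle hfu
    induction t using EReal.rec <;> simp_all [← EReal.coe_sub]
  · rintro ⟨a, c, ha, hc, hle⟩
    exact ⟨⟨a, ha⟩, by rw [ha, hc]; exact_mod_cast hle⟩

end

variable {E : Type*} [AddCommGroup E] [Module ℝ E] [TopologicalSpace E]

theorem mem_M1_iff {h : E → EReal} {ε : ℝ} {xs : E →L[ℝ] ℝ} {x : E} :
    x ∈ M1 h ε xs ↔ ∃ c : ℝ, h x = c ∧ ((c - xs x : ℝ) : EReal) ≤ (⨅ y, (h y - xs y)) + ε := by
  simp only [M1, epsArgmin, Set.mem_ofPred_eq]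
  generalize h x = t
  induction t using EReal.rec <;> simp [← EReal.coe_sub]

theorem mem_calA2_iff {f : U → E → EReal} {ε : ℝ} {xs : E →L[ℝ] ℝ} {x : E} :
    x ∈ calA2 f ε xs ↔ ∀ η : ℝ, 0 < η → ∃ u ε₁ ε₂, 0 ≤ ε₁ ∧ 0 ≤ ε₂ ∧ ε₁ + ε₂ = ε + η ∧
      x ∈ J2set f ε₁ u ∧ x ∈ M1 (f u) ε₂ xs := by
  simp only [calA2, Set.mem_iInter, Set.mem_iUnion, Set.mem_inter_iff, exists_prop]

theorem neg_iInf_eq_iSup_neg {ι : Sort*} (g : ι → EReal) : -⨅ i, g i = ⨆ i, -g i :=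
  EReal.negOrderIso.map_iInf g

theorem neg_iSup_eq_iInf_neg {ι : Sort*} (g : ι → EReal) : -⨆ i, g i = ⨅ i, -g i :=
  EReal.negOrderIso.map_iSup g

theorem conj1_eq_neg_iInf (h : E → EReal) (xs : E →L[ℝ] ℝ) :
    conj1 h xs = -⨅ x, (h x - xs x) := by
  rw [neg_iInf_eq_iSup_neg]
  refine iSup_congr fun x => ?_
  rw [EReal.neg_sub (.inr (EReal.coe_ne_bot _)) (.inr (EReal.coe_ne_top _)), sub_eq_add_neg,
    add_comm]

theorem iInf_sub_le_iInf_pSup_sub (f : U → E → EReal) (xs : E →L[ℝ] ℝ) (u : U) :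
    ⨅ x, (f u x - xs x) ≤ ⨅ x, (pSup f x - xs x) :=
  iInf_mono fun x => EReal.sub_le_sub (le_pSup u x) le_rfl

theorem conj1_pSup_eq_iInf_iff (f : U → E → EReal) (xs : E →L[ℝ] ℝ) :
    conj1 (pSup f) xs = ⨅ u, conj1 (f u) xs ↔
      ⨅ x, (pSup f x - xs x) ≤ ⨆ u, ⨅ x, (f u x - xs x) := by
  simp only [conj1_eq_neg_iInf]
  rw [← neg_iSup_eq_iInf_neg, neg_inj]
  exact ⟨le_of_eq, fun h => h.antisymm (iSup_le (iInf_sub_le_iInf_pSup_sub f xs))⟩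

section

variable {f : U → E → EReal} {xs : E →L[ℝ] ℝ}

theorem exists_sub_le_iInf_add_of_mem_calA2 {ε η : ℝ} {x : E} (hx : x ∈ calA2 f ε xs)
    (hη : 0 < η) : ∃ u, pSup f x - xs x ≤ (⨅ y, (f u y - xs y)) + ((ε + η : ℝ) : EReal) := by
  obtain ⟨u, ε₁, ε₂, -, -, hsum, hJ, hM⟩ := mem_calA2_iff.1 hx η hη
  obtain ⟨a, c, ha, hc, hac⟩ := mem_J2set_iff.1 hJ
  obtain ⟨c', hc', hle⟩ := mem_M1_iff.1 hM
  obtain rfl : c = c' := by exact_mod_cast hc.symm.trans hc'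
  refine ⟨u, ?_⟩
  rw [ha, ← hsum]
  calc (a : EReal) - xs x ≤ ((c - xs x : ℝ) : EReal) + ε₁ := by exact_mod_cast (by linarith)
    _ ≤ (⨅ y, (f u y - xs y)) + ε₂ + ε₁ := by gcongr
    _ = (⨅ y, (f u y - xs y)) + ((ε₁ + ε₂ : ℝ) : EReal) := by
      rw [EReal.coe_add, add_comm (ε₁ : EReal), add_assoc]

theorem calA2_subset_M1 (ε : ℝ) : calA2 f ε xs ⊆ M1 (pSup f) ε xs := by
  intro x hx
  obtain ⟨_, _, _, -, -, -, hJ, -⟩ := mem_calA2_iff.1 hx 1 one_pos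
  obtain ⟨a, -, ha, -⟩ := mem_J2set_iff.1 hJ
  refine mem_M1_iff.2 ⟨a, ha, le_of_forall_pos_le_add_coe fun η hη => ?_⟩
  obtain ⟨u, hu⟩ := exists_sub_le_iInf_add_of_mem_calA2 hx hη
  calc ((a - xs x : ℝ) : EReal) = pSup f x - xs x := by rw [ha, EReal.coe_sub]
    _ ≤ (⨅ y, (f u y - xs y)) + ((ε + η : ℝ) : EReal) := hu
    _ ≤ (⨅ y, (pSup f y - xs y)) + ε + η := by
      rw [EReal.coe_add, ← add_assoc]
      gcongr ?_ + _ + _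
      exact iInf_sub_le_iInf_pSup_sub f xs u

theorem M1_subset_calA2 (hdual : ⨅ x, (pSup f x - xs x) ≤ ⨆ u, ⨅ x, (f u x - xs x))
    (ε : ℝ) : M1 (pSup f) ε xs ⊆ calA2 f ε xs := by
  intro x hx
  obtain ⟨a, ha, hxm⟩ := mem_M1_iff.1 hx
  have hm_top : ⨅ y, (pSup f y - xs y) ≠ ⊤ :=
    ne_top_of_le_ne_top (EReal.coe_ne_top (a - xs x)) ((iInf_le _ x).trans_eq (by rw [ha]; rfl))
  have hm_bot : ⨅ y, (pSup f y - xs y) ≠ ⊥ := by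
    intro hm
    rw [hm, EReal.bot_add] at hxm
    exact EReal.coe_ne_bot _ (le_bot_iff.1 hxm)
  lift ⨅ y, (pSup f y - xs y) to ℝ using ⟨hm_top, hm_bot⟩ with m
  refine mem_calA2_iff.2 fun η hη => ?_
  obtain ⟨u, hu⟩ := lt_iSup_iff.1 <| hdual.trans_lt'
    (by exact_mod_cast sub_lt_self m hη : ((m - η : ℝ) : EReal) < m)
  have hfu : ((m - η : ℝ) : EReal) < f u x - xs x := hu.trans_le (iInf_le _ x)
  have hfu_bot : f u x ≠ ⊥ := by
    intro h
    simp [h] at hfu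
  have hfu_top : f u x ≠ ⊤ := ne_top_of_le_ne_top (ha ▸ EReal.coe_ne_top a) (le_pSup u x)
  lift f u x to ℝ using ⟨hfu_top, hfu_bot⟩ with c hc
  have hca : c ≤ a := by
    have h := le_pSup (f := f) u x
    rw [← hc, ha] at h
    exact_mod_cast h
  have hmc : m - η < c - xs x := by exact_mod_cast hfu
  have ham : a - xs x ≤ m + ε := by exact_mod_cast hxm
  refine ⟨u, a - c, ε + η - (a - c), by linarith, by linarith, by ring,
    mem_J2set_iff.2 ⟨a, c, ha, hc.symm, by linarith⟩, mem_M1_iff.2 ⟨c, hc.symm, ?_⟩⟩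
  calc ((c - xs x : ℝ) : EReal) ≤ ((m - η : ℝ) : EReal) + ((ε + η - (a - c) : ℝ) : EReal) := by
        exact_mod_cast (by linarith)
    _ ≤ (⨅ y, (f u y - xs y)) + ((ε + η - (a - c) : ℝ) : EReal) := by gcongr

theorem le_iSup_iInf_of_M1_subset_calA2 (htop : ⨅ x, (pSup f x - xs x) ≠ ⊤) {εbar : ℝ}
    (hεbar : 0 < εbar)
    (hsub : ∀ ε : ℝ, 0 < ε → ε < εbar → M1 (pSup f) ε xs ⊆ calA2 f ε xs) :
    ⨅ x, (pSup f x - xs x) ≤ ⨆ u, ⨅ x, (f u x - xs x) := by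
  rcases eq_or_ne (⨅ x, (pSup f x - xs x)) ⊥ with hbot | hbot
  · exact hbot ▸ bot_le
  refine le_of_forall_pos_le_add_coe fun δ hδ => ?_
  obtain ⟨ε, hε, hεbar', hεδ⟩ : ∃ ε : ℝ, 0 < ε ∧ ε < εbar ∧ ε + δ / 2 ≤ δ :=
    ⟨min εbar δ / 2, by positivity, by linarith [min_le_left εbar δ],
      by linarith [min_le_right εbar δ]⟩
  obtain ⟨x, hx⟩ := epsArgmin_nonempty hbot htop hε
  obtain ⟨u, hu⟩ := exists_sub_le_iInf_add_of_mem_calA2 (hsub ε hε hεbar' hx) (half_pos hδ)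
  calc ⨅ x, (pSup f x - xs x) ≤ pSup f x - xs x := iInf_le _ x
    _ ≤ (⨅ y, (f u y - xs y)) + ((ε + δ / 2 : ℝ) : EReal) := hu
    _ ≤ (⨆ u, ⨅ y, (f u y - xs y)) + δ := by
      gcongr
      exact le_iSup (fun u => ⨅ y, (f u y - xs y)) u

end

theorem infSup_duality_iff_M_eq_calA_general
    (f : U → X → EReal)
    (hdomp : ∃ x : X, pSup f x ≠ ⊤) (xs : X →L[ℝ] ℝ) :
    List.TFAE
      [conj1 (pSup f) xs = ⨅ u : U, conj1 (f u) xs,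
       ∀ ε : ℝ, 0 ≤ ε → M1 (pSup f) ε xs = calA2 f ε xs,
       ∃ εbar : ℝ, 0 < εbar ∧
         ∀ ε : ℝ, 0 < ε → ε < εbar → M1 (pSup f) ε xs = calA2 f ε xs] := by
  have htop : ⨅ x, (pSup f x - xs x) ≠ ⊤ := by
    obtain ⟨x, hx⟩ := hdomp
    exact ne_top_of_le_ne_top (EReal.add_ne_top hx (EReal.coe_ne_top _)) (iInf_le _ x)
  tfae_have 1 → 2 := fun hdual ε _ =>
    (M1_subset_calA2 ((conj1_pSup_eq_iInf_iff f xs).1 hdual) ε).antisymm (calA2_subset_M1 ε)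
  tfae_have 2 → 3 := fun h => ⟨1, one_pos, fun ε hε _ => h ε hε.le⟩
  tfae_have 3 → 1 := fun ⟨_, hεbar, h⟩ => (conj1_pSup_eq_iInf_iff f xs).2 <|
    le_iSup_iInf_of_M1_subset_calA2 htop hεbar fun ε hε hlt => (h ε hε hlt).subset
  tfae_finish

/-- Corollary 3.2 (robust duality for Case 2: no linear perturbations). -/
theorem infSup_duality_iff_M_eq_calA
    (f : U → X → EReal) (hU : Nonempty U) (hf : ∀ u x, f u x ≠ ⊥)
    (hdomp : ∃ x : X, pSup f x ≠ ⊤) (xs : X →L[ℝ] ℝ) :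
    List.TFAE
      [conj1 (pSup f) xs = ⨅ u : U, conj1 (f u) xs,
       ∀ ε : ℝ, 0 ≤ ε → M1 (pSup f) ε xs = calA2 f ε xs,
       ∃ εbar : ℝ, 0 < εbar ∧
         ∀ ε : ℝ, 0 < ε → ε < εbar → M1 (pSup f) ε xs = calA2 f ε xs] :=
  infSup_duality_iff_M_eq_calA_general f hdomp xs

end RobustDuality
end
end

section
/- Assume dom F_u ≠ ∅ for every u ∈ U, and let x* ∈ X* be such that the infimum defining q(x*) is attained, i.e., q(x*) = min over u ∈ U, y_u* ∈ Y_u* of F_u*(x*, y_u*). Then there exist u ∈ U and y_u* ∈ Y_u* such that S^ε(x*) = B^ε_{(u,y_u*)}(x*) for all ε ≥ 0. -/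
/-
The attained pair `(u, y*)` gives `-q(x*) = -F_u*(x*, y*) = inf (F_u - (x*, y*))`. For `x` with
`p(x) ∈ ℝ` put `s := F_u(x, 0)`: then `s ≤ p(x)`, and Fenchel–Young gives `-q(x*) ≤ s - ⟨x*, x⟩`.
Under these two inequalities `p(x) - ⟨x*, x⟩ ≤ -q(x*) + ε` is the same as splitting
`ε = ε₁ + ε₂` with `p(x) ≤ s + ε₁` (the `J`-condition) and `s - ⟨x*, x⟩ ≤ -q(x*) + ε₂` (the
`M`-condition): take `ε₁ := p(x) - s`.
-/

noncomputable section

namespace RobustDuality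

variable {X : Type*} [AddCommGroup X] [Module ℝ X] [TopologicalSpace X]
  [IsTopologicalAddGroup X] [ContinuousSMul ℝ X] [LocallyConvexSpace ℝ X] [T2Space X]

variable {U : Type*} {Y : U → Type*} [∀ u, AddCommGroup (Y u)] [∀ u, Module ℝ (Y u)]
  [∀ u, TopologicalSpace (Y u)] [∀ u, IsTopologicalAddGroup (Y u)]
  [∀ u, ContinuousSMul ℝ (Y u)] [∀ u, LocallyConvexSpace ℝ (Y u)] [∀ u, T2Space (Y u)]

theorem _root_.EReal.sub_coe_eq_neg_coe_sub (b : EReal) (a : ℝ) :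
    b - a = -((a : EReal) - b) := by
  rw [EReal.neg_sub (by simp) (by simp), sub_eq_add_neg, add_comm]

theorem _root_.EReal.neg_iSup {ι : Sort*} (f : ι → EReal) : -⨆ i, f i = ⨅ i, -f i :=
  EReal.negOrderIso.map_iSup f

theorem iInf_sub_eq_neg_conj2 {E Yu : Type*} [AddCommGroup E] [Module ℝ E] [TopologicalSpace E]
    [AddCommGroup Yu] [Module ℝ Yu] [TopologicalSpace Yu]
    (F : E × Yu → EReal) (xs : E →L[ℝ] ℝ) (ys : Yu →L[ℝ] ℝ) :
    ⨅ z : E × Yu, F z - ((xs z.1 + ys z.2 : ℝ) : EReal) = -conj2 F xs ys := by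
  rw [conj2, EReal.neg_iSup]
  exact iInf_congr fun z => EReal.sub_coe_eq_neg_coe_sub _ _

theorem Real.sub_le_add_iff_exists_split {p s m a ε : ℝ} (hsp : s ≤ p) (hms : m ≤ s - a) :
    p - a ≤ m + ε ↔
      ∃ ε₁ ε₂ : ℝ, 0 ≤ ε₁ ∧ 0 ≤ ε₂ ∧ ε₁ + ε₂ = ε ∧ p ≤ s + ε₁ ∧ s - a ≤ m + ε₂ :=
  ⟨fun h => ⟨p - s, ε - (p - s), by linarith, by linarith, by ring, by linarith, by linarith⟩,
    fun ⟨_, _, _, _, hε, hp, hs⟩ => by linarith⟩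

theorem EReal.sub_le_add_iff_exists_split {p s m : EReal} {a ε : ℝ} (hsp : s ≤ p)
    (hms : m ≤ s - a) :
    ((∃ r : ℝ, p = r) ∧ p - a ≤ m + ε) ↔
      ∃ ε₁ ε₂ : ℝ, 0 ≤ ε₁ ∧ 0 ≤ ε₂ ∧ ε₁ + ε₂ = ε ∧
        ((∃ r : ℝ, p = r) ∧ p ≤ s + ε₁) ∧ (∃ r : ℝ, s - a = r) ∧ s - a ≤ m + ε₂ := by
  induction p using EReal.rec <;> induction s using EReal.rec <;> induction m using EReal.rec
  case coe.coe.coe p s m =>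
    norm_cast at hsp hms ⊢
    simpa using Real.sub_le_add_iff_exists_split hsp hms
  -- if `p` is real, so are `s` and `m` on either side; otherwise both sides fail
  all_goals simp_all [← EReal.coe_sub]

theorem Sset_eq_Bset_of_q_attained_general
    (F : ∀ u, X × Y u → EReal) (xs : X →L[ℝ] ℝ)
    (hmin : ∃ (u : U) (ys : Y u →L[ℝ] ℝ), conj2 (F u) xs ys = qRob F xs) :
    ∃ (u : U) (ys : Y u →L[ℝ] ℝ), ∀ ε : ℝ, 0 ≤ ε → Sset F ε xs = Bset F ε u ys xs := by
  obtain ⟨u, ys, hq⟩ := hmin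
  refine ⟨u, ys, fun ε _ => Set.ext fun x => ?_⟩
  have hq_eq_iInf : -qRob F xs = ⨅ z : X × Y u, F u z - ((xs z.1 + ys z.2 : ℝ) : EReal) := by
    rw [← hq, iInf_sub_eq_neg_conj2]
  have hsp : F u (x, 0) ≤ pRob F x := le_iSup (fun u' => F u' (x, 0)) u
  have hms : (⨅ z : X × Y u, F u z - ((xs z.1 + ys z.2 : ℝ) : EReal)) ≤ F u (x, 0) - xs x := by
    simpa using iInf_le (fun z : X × Y u => F u z - ((xs z.1 + ys z.2 : ℝ) : EReal)) (x, 0)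
  simp only [Sset, Bset, Aset, Jset, M2, epsArgmin, Set.mem_ofPred_eq, Set.mem_iUnion, exists_prop,
    hq_eq_iInf, map_zero, add_zero]
  exact EReal.sub_le_add_iff_exists_split hsp hms

/-- Lemma 4.1: if the infimum defining `q(x*)` is attained then `S^ε(x*) = B^ε_{(u,y*)}(x*)`
for some `u, y*` and all `ε ≥ 0`. -/
theorem Sset_eq_Bset_of_q_attained
    (F : ∀ u, X × Y u → EReal) (hU : Nonempty U) (hF : ∀ u z, F u z ≠ ⊥)
    (hdomF : ∀ u, ∃ z : X × Y u, F u z ≠ ⊤) (xs : X →L[ℝ] ℝ)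
    (hmin : ∃ (u : U) (ys : Y u →L[ℝ] ℝ), conj2 (F u) xs ys = qRob F xs) :
    ∃ (u : U) (ys : Y u →L[ℝ] ℝ), ∀ ε : ℝ, 0 ≤ ε → Sset F ε xs = Bset F ε u ys xs :=
  Sset_eq_Bset_of_q_attained_general F xs hmin

end RobustDuality
end
end

section
/- For every ε ≥ 0 and every x ∈ X, the inverse image of x under the set-valued mapping 𝒜^ε, namely {x* ∈ X* : x ∈ 𝒜^ε(x*)}, equals ⋂_{η>0} ⋃_{ε₁,ε₂≥0, ε₁+ε₂=ε+η} ⋃_{u∈I^{ε₁}(x)} proj^u_{X*} ∂^{ε₂}F_u(x, 0_u), where proj^u_{X*} : X* × Y_u* → X* is the projection (x*, y_u*) ↦ x*. -/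
noncomputable section

namespace RobustDuality

variable {X : Type*} [AddCommGroup X] [Module ℝ X] [TopologicalSpace X]
  [IsTopologicalAddGroup X] [ContinuousSMul ℝ X] [LocallyConvexSpace ℝ X] [T2Space X]

variable {U : Type*} {Y : U → Type*} [∀ u, AddCommGroup (Y u)] [∀ u, Module ℝ (Y u)]
  [∀ u, TopologicalSpace (Y u)] [∀ u, IsTopologicalAddGroup (Y u)]
  [∀ u, ContinuousSMul ℝ (Y u)] [∀ u, LocallyConvexSpace ℝ (Y u)] [∀ u, T2Space (Y u)]

/-! Membership `x ∈ A^{(ε₁,ε₂)}_{(u,y*)}(x*)` unfolds to `u ∈ I^{ε₁}(x)` together with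
`(x*, y*) ∈ ∂^{ε₂}F_u(x, 0)`: the condition defining `J^{ε₁}(u)` is that of `I^{ε₁}(x)` with `ε₁`
moved across, and `a` is an `ε`-minimizer of `h - φ` exactly when `φ` is an `ε`-subgradient of `h`
at `a`. Both sides of the theorem are then the same intersection of unions. -/

theorem mem_epsArgmin_sub_iff {Z : Type*} (h : Z → EReal) (φ : Z → ℝ) (ε : ℝ) (a : Z) :
    a ∈ epsArgmin (fun z => h z - (φ z : EReal)) ε ↔
      (∃ r : ℝ, h a = r) ∧ ∀ z, h a + ((φ z - φ a - ε : ℝ) : EReal) ≤ h z := by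
  have real_iff : (∃ r : ℝ, h a - (φ a : EReal) = r) ↔ ∃ r : ℝ, h a = r := by
    constructor
    · rintro ⟨r, hr⟩
      refine ⟨r + φ a, ?_⟩
      rw [EReal.coe_add, ← hr, EReal.sub_add_cancel]
    · rintro ⟨r, hr⟩
      exact ⟨r - φ a, by rw [hr, EReal.coe_sub]⟩
  simp only [epsArgmin, Set.mem_ofPred_eq, real_iff]
  refine and_congr_right fun ⟨s, hs⟩ => ?_
  rw [hs, ← EReal.sub_le_iff_le_add (.inl (EReal.coe_ne_bot ε)) (.inl (EReal.coe_ne_top ε)),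
    le_iInf_iff]
  refine forall_congr' fun z => ?_
  rw [EReal.le_sub_iff_add_le (.inl (EReal.coe_ne_bot _)) (.inl (EReal.coe_ne_top _))]
  convert Iff.rfl using 2
  norm_cast
  ring

section Pair

variable {Yu : Type*} [AddCommGroup Yu] [Module ℝ Yu] [TopologicalSpace Yu]
  [IsTopologicalAddGroup Yu] [ContinuousSMul ℝ Yu] [LocallyConvexSpace ℝ Yu] [T2Space Yu]

theorem mem_M2_iff_mem_epsSubdiff2 (F : X × Yu → EReal) (ε : ℝ) (xs : X →L[ℝ] ℝ)
    (ys : Yu →L[ℝ] ℝ) (a : X × Yu) : a ∈ M2 F ε xs ys ↔ (xs, ys) ∈ epsSubdiff2 F ε a := by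
  simp only [M2, epsSubdiff2, mem_epsArgmin_sub_iff, Set.mem_ofPred_eq, sub_add_eq_sub_sub]

end Pair

theorem mem_Jset_iff_mem_Iset (F : ∀ u, X × Y u → EReal) (ε : ℝ) (u : U) (x : X) :
    x ∈ Jset F ε u ↔ u ∈ Iset F ε x :=
  and_congr_right' (EReal.sub_le_iff_le_add (.inl (EReal.coe_ne_bot ε))
    (.inl (EReal.coe_ne_top ε))).symm

theorem mem_Aset_iff (F : ∀ u, X × Y u → EReal) (ε₁ ε₂ : ℝ) (u : U) (ys : Y u →L[ℝ] ℝ)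
    (xs : X →L[ℝ] ℝ) (x : X) :
    x ∈ Aset F ε₁ ε₂ u ys xs ↔
      u ∈ Iset F ε₁ x ∧ (xs, ys) ∈ epsSubdiff2 (F u) ε₂ (x, (0 : Y u)) :=
  (mem_Jset_iff_mem_Iset F ε₁ u x).and (mem_M2_iff_mem_epsSubdiff2 _ _ _ _ _)

theorem calA_inv_eq_Cset_general
    (F : ∀ u, X × Y u → EReal) (ε : ℝ) (x : X) :
    {xs : X →L[ℝ] ℝ | x ∈ calA F ε xs} = Cset F ε x := by
  ext xs
  simp only [Set.mem_ofPred_eq, calA, Cset, Set.mem_iInter, Set.mem_iUnion, mem_Aset_iff]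
  refine forall₂_congr fun η _ => ⟨?_, ?_⟩
  · rintro ⟨u, ys, ε₁, ε₂, h₁, h₂, hsum, hu, hsub⟩
    exact ⟨ε₁, ε₂, h₁, h₂, hsum, u, hu, (xs, ys), hsub, rfl⟩
  · rintro ⟨ε₁, ε₂, h₁, h₂, hsum, u, hu, ⟨_, ys⟩, hsub, rfl⟩
    exact ⟨u, ys, ε₁, ε₂, h₁, h₂, hsum, hu, hsub⟩

/-- Lemma 6.1: the inverse image of `x` under `𝒜^ε` is `C^ε(x)`. -/
theorem calA_inv_eq_Cset
    (F : ∀ u, X × Y u → EReal) (hU : Nonempty U) (hF : ∀ u z, F u z ≠ ⊥)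
    (ε : ℝ) (hε : 0 ≤ ε) (x : X) :
    {xs : X →L[ℝ] ℝ | x ∈ calA F ε xs} = Cset F ε x :=
  calA_inv_eq_Cset_general F ε x

end RobustDuality
end
end
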